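/- arXiv:2311.18039 — 3 statements merged into one kernel-verified Lean document; each statement's English description precedes it below -/
import Mathlib

section
/- Let X be a real N × p matrix with XᵀX invertible, and let W₁ (N × q₁) and W₂ (N × q₂) satisfy XᵀW₁ = 0, XᵀW₂ = 0, W₁ᵀW₂ = 0, W₁ᵀW₁ = I_{q₁}, and W₂ᵀW₂ = I_{q₂}. Let F₁ and F₂ be symmetric positive definite matrices of sizes q₁ and q₂, let τ_ε, τ₁, τ₂ > 0, and let y ∈ ℝᴺ. Define δ̂ = (XᵀX)⁻¹Xᵀy and m_j = τ_ε (τ_ε I + τ_j F_j)⁻¹ W_jᵀ y for j = 1, 2. Then there exists a constant c ∈ ℝ, not depending on (δ, η₁, η₂), such that for all δ ∈ ℝᵖ, η₁ ∈ ℝ^{q₁}, η₂ ∈ ℝ^{q₂}: τ_ε ‖y − Xδ − W₁η₁ − W₂η₂‖² + τ₁ η₁ᵀF₁η₁ + τ₂ η₂ᵀF₂η₂ = τ_ε (δ − δ̂)ᵀ(XᵀX)(δ − δ̂) + (η₁ − m₁)ᵀ(τ_ε I + τ₁F₁)(η₁ − m₁) + (η₂ − m₂)ᵀ(τ_ε I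 + τ₂F₂)(η₂ − m₂) + c. In particular, the δ-component δ̂ and its precision block τ_ε XᵀX do not depend on τ₁, τ₂, F₁, or F₂. -/
/-!
Expanding the residual, the cross terms between `Xδ`, `W₁η₁` and `W₂η₂` vanish by
orthogonality, so the exponent splits into one quadratic in each block. The `δ`-block has
matrix `τ_ε XᵀX` and linear term `τ_ε Xᵀy`; since `W_jᵀW_j = 1`, the `η_j`-block has matrix
`τ_ε I + τ_j F_j` and linear term `τ_ε W_jᵀy`. Completing the square in each block separately
gives the claim, with centres `δ̂` and `m_j`.
-/

open Matrix

namespace Matrix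

variable {R : Type*} [CommRing R] {l m n : Type*} [Fintype l] [Fintype m] [Fintype n]

theorem mulVec_nonsing_inv_mulVec [DecidableEq n] {A : Matrix n n R} (hA : IsUnit A.det)
    (b : n → R) : A *ᵥ (A⁻¹ *ᵥ b) = b := by
  rw [mulVec_mulVec, mul_nonsing_inv _ hA, one_mulVec]

theorem dotProduct_mulVec_eq_transpose (A : Matrix m n R) (v : m → R) (u : n → R) :
    v ⬝ᵥ (A *ᵥ u) = u ⬝ᵥ (Aᵀ *ᵥ v) := by
  rw [dotProduct_mulVec, ← mulVec_transpose, dotProduct_comm]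

theorem mulVec_dotProduct_mulVec (A : Matrix l m R) (B : Matrix l n R) (u : m → R)
    (v : n → R) : (A *ᵥ u) ⬝ᵥ (B *ᵥ v) = u ⬝ᵥ ((Aᵀ * B) *ᵥ v) := by
  rw [dotProduct_comm, dotProduct_mulVec_eq_transpose, mulVec_mulVec]

theorem mulVec_dotProduct_mulVec_eq_zero {A : Matrix l m R} {B : Matrix l n R}
    (hAB : Aᵀ * B = 0) (u : m → R) (v : n → R) : (A *ᵥ u) ⬝ᵥ (B *ᵥ v) = 0 := by
  rw [mulVec_dotProduct_mulVec, hAB, zero_mulVec, dotProduct_zero]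

theorem mulVec_dotProduct_self_sub_two_mul (A : Matrix l m R) (y : l → R) (u : m → R) :
    (A *ᵥ u) ⬝ᵥ (A *ᵥ u) - 2 * (y ⬝ᵥ (A *ᵥ u))
      = u ⬝ᵥ ((Aᵀ * A) *ᵥ u) - 2 * (u ⬝ᵥ (Aᵀ *ᵥ y)) := by
  rw [mulVec_dotProduct_mulVec, dotProduct_mulVec_eq_transpose A y]

theorem IsSymm.dotProduct_mulVec_comm {A : Matrix n n R} (hA : A.IsSymm) (u v : n → R) :
    v ⬝ᵥ (A *ᵥ u) = u ⬝ᵥ (A *ᵥ v) := by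
  rw [dotProduct_mulVec_eq_transpose, hA.eq]

theorem IsSymm.dotProduct_mulVec_sub_two_mul_eq {A : Matrix n n R} (hA : A.IsSymm)
    {c b : n → R} (hc : A *ᵥ c = b) (u : n → R) :
    u ⬝ᵥ (A *ᵥ u) - 2 * (u ⬝ᵥ b) = (u - c) ⬝ᵥ (A *ᵥ (u - c)) - c ⬝ᵥ (A *ᵥ c) := by
  simp only [mulVec_sub, dotProduct_sub, sub_dotProduct, ← hc, hA.dotProduct_mulVec_comm u c]
  ring

theorem dotProduct_self_sub_sub_sub_of_orthogonal {a b c : n → R} (hab : a ⬝ᵥ b = 0)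
    (hac : a ⬝ᵥ c = 0) (hbc : b ⬝ᵥ c = 0) (y : n → R) :
    (y - a - b - c) ⬝ᵥ (y - a - b - c)
      = y ⬝ᵥ y + (a ⬝ᵥ a - 2 * (y ⬝ᵥ a)) + (b ⬝ᵥ b - 2 * (y ⬝ᵥ b))
        + (c ⬝ᵥ c - 2 * (y ⬝ᵥ c)) := by
  simp only [dotProduct_sub, sub_dotProduct, dotProduct_comm _ y, dotProduct_comm b a,
    dotProduct_comm c a, dotProduct_comm c b, hab, hac, hbc]
  ring

theorem smul_one_add_smul_dotProduct_sub_two_mul [DecidableEq n] (F : Matrix n n R) (s t : R)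
    (η b : n → R) :
    η ⬝ᵥ ((s • 1 + t • F) *ᵥ η) - 2 * (η ⬝ᵥ (s • b))
      = s * (η ⬝ᵥ η - 2 * (η ⬝ᵥ b)) + t * (η ⬝ᵥ (F *ᵥ η)) := by
  simp only [add_mulVec, smul_mulVec, one_mulVec, dotProduct_add, dotProduct_smul, smul_eq_mul]
  ring

end Matrix

/-- Quadratic-form separation for restricted regression with two random
effects: there is a constant `c` (independent of `(δ, η₁, η₂)`) such that
`τ_ε‖y − Xδ − W₁η₁ − W₂η₂‖² + τ₁η₁ᵀF₁η₁ + τ₂η₂ᵀF₂η₂`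
equals `τ_ε(δ − δ̂)ᵀ(XᵀX)(δ − δ̂) + (η₁ − m₁)ᵀ(τ_εI + τ₁F₁)(η₁ − m₁)
+ (η₂ − m₂)ᵀ(τ_εI + τ₂F₂)(η₂ − m₂) + c`. -/
theorem two_random_effects_quadratic_separation
    {N p q₁ q₂ : ℕ}
    (X : Matrix (Fin N) (Fin p) ℝ) (hX : IsUnit (Xᵀ * X).det)
    (W₁ : Matrix (Fin N) (Fin q₁) ℝ) (W₂ : Matrix (Fin N) (Fin q₂) ℝ)
    (hXW₁ : Xᵀ * W₁ = 0) (hXW₂ : Xᵀ * W₂ = 0) (hW₁₂ : W₁ᵀ * W₂ = 0)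
    (hW₁ : W₁ᵀ * W₁ = 1) (hW₂ : W₂ᵀ * W₂ = 1)
    (F₁ : Matrix (Fin q₁) (Fin q₁) ℝ) (F₂ : Matrix (Fin q₂) (Fin q₂) ℝ)
    (hF₁ : F₁.PosDef) (hF₂ : F₂.PosDef)
    (τε τ₁ τ₂ : ℝ) (hτε : 0 < τε) (hτ₁ : 0 < τ₁) (hτ₂ : 0 < τ₂)
    (y : Fin N → ℝ) :
    let δhat : Fin p → ℝ := (Xᵀ * X)⁻¹ *ᵥ (Xᵀ *ᵥ y)
    let m₁ : Fin q₁ → ℝ :=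
      τε • ((τε • (1 : Matrix (Fin q₁) (Fin q₁) ℝ) + τ₁ • F₁)⁻¹ *ᵥ (W₁ᵀ *ᵥ y))
    let m₂ : Fin q₂ → ℝ :=
      τε • ((τε • (1 : Matrix (Fin q₂) (Fin q₂) ℝ) + τ₂ • F₂)⁻¹ *ᵥ (W₂ᵀ *ᵥ y))
    ∃ c : ℝ, ∀ (δ : Fin p → ℝ) (η₁ : Fin q₁ → ℝ) (η₂ : Fin q₂ → ℝ),
      τε * ((y - X *ᵥ δ - W₁ *ᵥ η₁ - W₂ *ᵥ η₂) ⬝ᵥ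
              (y - X *ᵥ δ - W₁ *ᵥ η₁ - W₂ *ᵥ η₂))
        + τ₁ * (η₁ ⬝ᵥ (F₁ *ᵥ η₁)) + τ₂ * (η₂ ⬝ᵥ (F₂ *ᵥ η₂))
      = τε * ((δ - δhat) ⬝ᵥ ((Xᵀ * X) *ᵥ (δ - δhat)))
        + (η₁ - m₁) ⬝ᵥ ((τε • (1 : Matrix (Fin q₁) (Fin q₁) ℝ) + τ₁ • F₁) *ᵥ (η₁ - m₁))
        + (η₂ - m₂) ⬝ᵥ ((τε • (1 : Matrix (Fin q₂) (Fin q₂) ℝ) + τ₂ • F₂) *ᵥ (η₂ - m₂))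
        + c := by
  intro δhat m₁ m₂
  have hXX : (Xᵀ * X).IsSymm := transpose_mul _ _
  have hA₁ : (τε • (1 : Matrix (Fin q₁) (Fin q₁) ℝ) + τ₁ • F₁).PosDef :=
    (PosDef.one.smul hτε).add (hF₁.smul hτ₁)
  have hA₂ : (τε • (1 : Matrix (Fin q₂) (Fin q₂) ℝ) + τ₂ • F₂).PosDef :=
    (PosDef.one.smul hτε).add (hF₂.smul hτ₂)
  have hδ := hXX.dotProduct_mulVec_sub_two_mul_eq (mulVec_nonsing_inv_mulVec hX (Xᵀ *ᵥ y))
  have hη₁ := (isHermitian_iff_isSymm.mp hA₁.1).dotProduct_mulVec_sub_two_mul_eq (c := m₁)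
    (by rw [mulVec_smul, mulVec_nonsing_inv_mulVec (hA₁.isUnit.map detMonoidHom)])
  have hη₂ := (isHermitian_iff_isSymm.mp hA₂.1).dotProduct_mulVec_sub_two_mul_eq (c := m₂)
    (by rw [mulVec_smul, mulVec_nonsing_inv_mulVec (hA₂.isUnit.map detMonoidHom)])
  simp only [smul_one_add_smul_dotProduct_sub_two_mul] at hη₁ hη₂
  refine ⟨τε * (y ⬝ᵥ y - δhat ⬝ᵥ ((Xᵀ * X) *ᵥ δhat))
      - m₁ ⬝ᵥ ((τε • 1 + τ₁ • F₁) *ᵥ m₁) - m₂ ⬝ᵥ ((τε • 1 + τ₂ • F₂) *ᵥ m₂),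
    fun δ η₁ η₂ => ?_⟩
  rw [dotProduct_self_sub_sub_sub_of_orthogonal (mulVec_dotProduct_mulVec_eq_zero hXW₁ δ η₁)
      (mulVec_dotProduct_mulVec_eq_zero hXW₂ δ η₂) (mulVec_dotProduct_mulVec_eq_zero hW₁₂ η₁ η₂),
    mulVec_dotProduct_self_sub_two_mul, mulVec_dotProduct_self_sub_two_mul,
    mulVec_dotProduct_self_sub_two_mul, hW₁, hW₂, one_mulVec, one_mulVec]
  linear_combination τε * hδ δ + hη₁ η₁ + hη₂ η₂
end

section
/- Under the hypotheses of the separation identity — X a real N × p matrix with XᵀX invertible; W₁ (N × q₁), W₂ (N × q₂) with XᵀW₁ = 0, XᵀW₂ = 0, W₁ᵀW₂ = 0, W₁ᵀW₁ = I, W₂ᵀW₂ = I; F₁, F₂ symmetric positive definite; τ_ε, τ₁, τ₂ > 0; y ∈ ℝᴺ; δ̂ = (XᵀX)⁻¹Xᵀy — there exists a constant C > 0, not depending on δ, such that for every δ ∈ ℝᵖ: ∫_{ℝ^{q₁}} ∫_{ℝ^{q₂}} exp( −½ [ τ_ε ‖y − Xδ − W₁η₁ − W₂η₂‖² + τ₁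 η₁ᵀF₁η₁ + τ₂ η₂ᵀF₂η₂ ] ) dη₂ dη₁ = C · exp( −½ τ_ε (δ − δ̂)ᵀ(XᵀX)(δ − δ̂) ). In particular, the marginal (over η₁, η₂) unnormalized posterior density of δ is a Gaussian density with mean δ̂ = (XᵀX)⁻¹Xᵀy and covariance (τ_ε XᵀX)⁻¹, independent of τ₁, τ₂, F₁, F₂. -/
/-!
Orthogonality of the design blocks splits the residual sum of squares: with `δ̂` solving the
normal equations,
`‖y − Xδ − W₁η₁ − W₂η₂‖² = (δ − δ̂)ᵀXᵀX(δ − δ̂) + ‖y − Xδ̂‖²`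
`  + (‖η₁‖² − 2⟨W₁ᵀy, η₁⟩) + (‖η₂‖² − 2⟨W₂ᵀy, η₂⟩)`.
Hence the integrand factors as a function of `δ` times a function of `η₁` times a function
of `η₂`, and the double integral is the Gaussian kernel in `δ` times the two `η`-integrals,
which are finite and positive because the random-effect exponents are dominated by a Gaussian.
-/

open Matrix MeasureTheory

section Residual

variable {R m n k : Type*} [CommRing R] [Fintype m] [Fintype n]

theorem dotProduct_self_sub_mulVec (u : m → R) (B : Matrix m n R) (b : n → R) :
    (u - B *ᵥ b) ⬝ᵥ (u - B *ᵥ b)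
      = u ⬝ᵥ u - 2 * ((Bᵀ *ᵥ u) ⬝ᵥ b) + b ⬝ᵥ ((Bᵀ * B) *ᵥ b) := by
  have hcross : (B *ᵥ b) ⬝ᵥ u = (Bᵀ *ᵥ u) ⬝ᵥ b := by
    rw [dotProduct_comm (Bᵀ *ᵥ u), dotProduct_transpose_mulVec, dotProduct_comm]
  have hsq : (B *ᵥ b) ⬝ᵥ (B *ᵥ b) = b ⬝ᵥ ((Bᵀ * B) *ᵥ b) := by
    rw [← mulVec_mulVec, dotProduct_transpose_mulVec]
  rw [sub_dotProduct, dotProduct_sub, dotProduct_sub, dotProduct_comm u (B *ᵥ b), hcross, hsq]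
  ring

theorem dotProduct_self_sub_mulVec_of_transpose_mul_self_eq_one [DecidableEq n]
    {W : Matrix m n R} (hW : Wᵀ * W = 1) (u : m → R) (η : n → R) :
    (u - W *ᵥ η) ⬝ᵥ (u - W *ᵥ η) = u ⬝ᵥ u + (η ⬝ᵥ η - 2 * ((Wᵀ *ᵥ u) ⬝ᵥ η)) := by
  rw [dotProduct_self_sub_mulVec, hW, one_mulVec]
  ring

theorem dotProduct_self_sub_mulVec_of_normal_eq {X : Matrix m n R} {y : m → R} {δhat : n → R}
    (hnormal : (Xᵀ * X) *ᵥ δhat = Xᵀ *ᵥ y) (δ : n → R) :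
    (y - X *ᵥ δ) ⬝ᵥ (y - X *ᵥ δ)
      = (δ - δhat) ⬝ᵥ ((Xᵀ * X) *ᵥ (δ - δhat)) + (y - X *ᵥ δhat) ⬝ᵥ (y - X *ᵥ δhat) := by
  have hperp : Xᵀ *ᵥ (y - X *ᵥ δhat) = 0 := by
    rw [mulVec_sub, mulVec_mulVec, hnormal, sub_self]
  have hsplit : y - X *ᵥ δ = (y - X *ᵥ δhat) - X *ᵥ (δ - δhat) := by
    rw [mulVec_sub]; abel
  rw [hsplit, dotProduct_self_sub_mulVec, hperp, zero_dotProduct]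
  ring

theorem dotProduct_self_residual_eq_of_orthogonal [Fintype k] [DecidableEq n] [DecidableEq k]
    {N : Type*} [Fintype N] {X : Matrix N m R} {W₁ : Matrix N n R} {W₂ : Matrix N k R}
    (hXW₁ : Xᵀ * W₁ = 0) (hXW₂ : Xᵀ * W₂ = 0) (hW₁₂ : W₁ᵀ * W₂ = 0)
    (hW₁ : W₁ᵀ * W₁ = 1) (hW₂ : W₂ᵀ * W₂ = 1) {y : N → R} {δhat : m → R}
    (hnormal : (Xᵀ * X) *ᵥ δhat = Xᵀ *ᵥ y) (δ : m → R) (η₁ : n → R) (η₂ : k → R) :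
    (y - X *ᵥ δ - W₁ *ᵥ η₁ - W₂ *ᵥ η₂) ⬝ᵥ (y - X *ᵥ δ - W₁ *ᵥ η₁ - W₂ *ᵥ η₂)
      = (δ - δhat) ⬝ᵥ ((Xᵀ * X) *ᵥ (δ - δhat)) + (y - X *ᵥ δhat) ⬝ᵥ (y - X *ᵥ δhat)
        + (η₁ ⬝ᵥ η₁ - 2 * ((W₁ᵀ *ᵥ y) ⬝ᵥ η₁)) + (η₂ ⬝ᵥ η₂ - 2 * ((W₂ᵀ *ᵥ y) ⬝ᵥ η₂)) := by
  have hW₁X : W₁ᵀ * X = 0 := by simpa using congr_arg transpose hXW₁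
  have hW₂X : W₂ᵀ * X = 0 := by simpa using congr_arg transpose hXW₂
  have hW₂₁ : W₂ᵀ * W₁ = 0 := by simpa using congr_arg transpose hW₁₂
  rw [dotProduct_self_sub_mulVec_of_transpose_mul_self_eq_one hW₂,
    dotProduct_self_sub_mulVec_of_transpose_mul_self_eq_one hW₁,
    dotProduct_self_sub_mulVec_of_normal_eq hnormal]
  simp only [mulVec_sub, mulVec_mulVec, hW₁X, hW₂X, hW₂₁, zero_mulVec, sub_zero]

end Residual

section Integral

theorem integral_integral_exp_add_add {α β : Type*} [MeasurableSpace α] [MeasurableSpace β]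
    (μ : Measure α) (ν : Measure β) (c : ℝ) (f : α → ℝ) (g : β → ℝ) :
    ∫ x, ∫ y, Real.exp (c + f x + g y) ∂ν ∂μ
      = Real.exp c * (∫ x, Real.exp (f x) ∂μ) * ∫ y, Real.exp (g y) ∂ν := by
  simp only [Real.exp_add, integral_const_mul, integral_mul_const]

variable {ι : Type*} [Fintype ι]

theorem integrable_exp_neg_mul_dotProduct_self_add_dotProduct {b : ℝ} (hb : 0 < b)
    (a : ι → ℝ) : Integrable fun x : ι → ℝ => Real.exp (-b * (x ⬝ᵥ x) + a ⬝ᵥ x) := by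
  refine (GaussianFourier.integrable_cexp_neg_mul_sum_add (b := (b : ℂ)) (by simpa using hb)
    fun i => (a i : ℂ)).norm.congr (ae_of_all _ fun x => ?_)
  have harg : -(b : ℂ) * ∑ i, (x i : ℂ) ^ 2 + ∑ i, (a i : ℂ) * x i
      = ((-b * (x ⬝ᵥ x) + a ⬝ᵥ x : ℝ) : ℂ) := by
    simp [dotProduct, sq]
  simp only [harg, ← Complex.ofReal_exp, Complex.norm_real,
    Real.norm_of_nonneg (Real.exp_pos _).le]

theorem integrable_exp_neg_half_penalized_quadratic {c τ : ℝ} (hc : 0 < c) (hτ : 0 ≤ τ)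
    {F : Matrix ι ι ℝ} (hF : F.PosSemidef) (a : ι → ℝ) :
    Integrable fun η : ι → ℝ =>
      Real.exp (-(1 / 2) * (c * (η ⬝ᵥ η - 2 * (a ⬝ᵥ η)) + τ * (η ⬝ᵥ (F *ᵥ η)))) := by
  refine (integrable_exp_neg_mul_dotProduct_self_add_dotProduct (half_pos hc) (c • a)).mono'
    (by fun_prop) (ae_of_all _ fun η => ?_)
  have hq : 0 ≤ η ⬝ᵥ (F *ᵥ η) := by simpa using hF.dotProduct_mulVec_nonneg η
  rw [Real.norm_of_nonneg (Real.exp_pos _).le, Real.exp_le_exp, smul_dotProduct, smul_eq_mul]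
  nlinarith [mul_nonneg hτ hq]

end Integral

/-- Marginalizing the joint restricted-regression posterior kernel over the two
random effects yields a Gaussian kernel in `δ` with mean `δ̂ = (XᵀX)⁻¹Xᵀy` and
precision `τ_ε XᵀX`: there is a constant `C > 0`, independent of `δ`, with
`∫∫ exp(−½[τ_ε‖y − Xδ − W₁η₁ − W₂η₂‖² + τ₁η₁ᵀF₁η₁ + τ₂η₂ᵀF₂η₂]) dη₂ dη₁
 = C · exp(−½ τ_ε (δ − δ̂)ᵀ(XᵀX)(δ − δ̂))`. -/
theorem two_random_effects_marginal_posterior_gaussian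
    {N p q₁ q₂ : ℕ}
    (X : Matrix (Fin N) (Fin p) ℝ) (hX : IsUnit (Xᵀ * X).det)
    (W₁ : Matrix (Fin N) (Fin q₁) ℝ) (W₂ : Matrix (Fin N) (Fin q₂) ℝ)
    (hXW₁ : Xᵀ * W₁ = 0) (hXW₂ : Xᵀ * W₂ = 0) (hW₁₂ : W₁ᵀ * W₂ = 0)
    (hW₁ : W₁ᵀ * W₁ = 1) (hW₂ : W₂ᵀ * W₂ = 1)
    (F₁ : Matrix (Fin q₁) (Fin q₁) ℝ) (F₂ : Matrix (Fin q₂) (Fin q₂) ℝ)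
    (hF₁ : F₁.PosDef) (hF₂ : F₂.PosDef)
    (τε τ₁ τ₂ : ℝ) (hτε : 0 < τε) (hτ₁ : 0 < τ₁) (hτ₂ : 0 < τ₂)
    (y : Fin N → ℝ) :
    let δhat : Fin p → ℝ := (Xᵀ * X)⁻¹ *ᵥ (Xᵀ *ᵥ y)
    ∃ C : ℝ, 0 < C ∧ ∀ δ : Fin p → ℝ,
      (∫ η₁ : Fin q₁ → ℝ, ∫ η₂ : Fin q₂ → ℝ,
          Real.exp (-(1 / 2) *
            (τε * ((y - X *ᵥ δ - W₁ *ᵥ η₁ - W₂ *ᵥ η₂) ⬝ᵥ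
                    (y - X *ᵥ δ - W₁ *ᵥ η₁ - W₂ *ᵥ η₂))
              + τ₁ * (η₁ ⬝ᵥ (F₁ *ᵥ η₁)) + τ₂ * (η₂ ⬝ᵥ (F₂ *ᵥ η₂)))))
      = C * Real.exp (-(1 / 2) *
          (τε * ((δ - δhat) ⬝ᵥ ((Xᵀ * X) *ᵥ (δ - δhat))))) := by
  intro δhat
  have hnormal : (Xᵀ * X) *ᵥ δhat = Xᵀ *ᵥ y := by
    rw [mulVec_mulVec, mul_nonsing_inv _ hX, one_mulVec]
  set g₁ : (Fin q₁ → ℝ) → ℝ :=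
    fun η => -(1 / 2) * (τε * (η ⬝ᵥ η - 2 * ((W₁ᵀ *ᵥ y) ⬝ᵥ η)) + τ₁ * (η ⬝ᵥ (F₁ *ᵥ η)))
  set g₂ : (Fin q₂ → ℝ) → ℝ :=
    fun η => -(1 / 2) * (τε * (η ⬝ᵥ η - 2 * ((W₂ᵀ *ᵥ y) ⬝ᵥ η)) + τ₂ * (η ⬝ᵥ (F₂ *ᵥ η)))
  have hI₁ : 0 < ∫ η, Real.exp (g₁ η) := integral_exp_pos
    (integrable_exp_neg_half_penalized_quadratic hτε hτ₁.le hF₁.posSemidef _)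
  have hI₂ : 0 < ∫ η, Real.exp (g₂ η) := integral_exp_pos
    (integrable_exp_neg_half_penalized_quadratic hτε hτ₂.le hF₂.posSemidef _)
  set K := τε * ((y - X *ᵥ δhat) ⬝ᵥ (y - X *ᵥ δhat))
  refine ⟨Real.exp (-(1 / 2) * K) * (∫ η, Real.exp (g₁ η)) * ∫ η, Real.exp (g₂ η),
    by positivity, fun δ => ?_⟩
  set T := τε * ((δ - δhat) ⬝ᵥ ((Xᵀ * X) *ᵥ (δ - δhat)))
  calc _ = ∫ η₁, ∫ η₂, Real.exp (-(1 / 2) * (T + K) + g₁ η₁ + g₂ η₂) := by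
        congr! 4 with η₁ η₂
        rw [dotProduct_self_residual_eq_of_orthogonal hXW₁ hXW₂ hW₁₂ hW₁ hW₂ hnormal]
        simp only [T, K, g₁, g₂]
        congr 1
        ring
    _ = Real.exp (-(1 / 2) * (T + K)) * (∫ η, Real.exp (g₁ η)) * ∫ η, Real.exp (g₂ η) :=
        integral_integral_exp_add_add _ _ _ _ _
    _ = _ := by rw [mul_add, Real.exp_add]; ring
end

section
/- Let X be a real N × p matrix with XᵀX invertible and P_X = X(XᵀX)⁻¹Xᵀ. On a probability space, let ε = (ε_1, …, ε_N) be independent real random variables, each square-integrable with mean 0 and variance σ² > 0, let u be any ℝᴺ-valued random vector (possibly dependent among its coordinates but defined on the same probability space), and let δ ∈ ℝᵖ be fixed. Define the random response y = Xδ + (I − P_X)u + ε and the estimator δ̂ = (XᵀX)⁻¹Xᵀy. Then for each ℓ: E[δ̂_ℓ] = δ_ℓ, and for each pair ℓ, m: Cov(δ̂_ℓ, δ̂_m) = σ² ((XᵀX)⁻¹)_{ℓm}. In particular, the sampling distribution of δ̂ is unaffected by the distribution of the restricted random effects u. -/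
/-!
`X` has the left inverse `M = (XᵀX)⁻¹Xᵀ`, and `M` annihilates `I − P_X` because `Xᵀ(I − P_X) = 0`.
Hence `δ̂ = δ + Mε` pointwise, whatever `u` is, and the moments of `δ̂` are those of a fixed linear
image of the uncorrelated errors: mean `δ` and covariance `σ² M Mᵀ = σ² (XᵀX)⁻¹`.
-/

open Matrix MeasureTheory ProbabilityTheory

namespace Matrix

variable {R m n : Type*} [CommRing R] [Fintype m] [Fintype n] [DecidableEq n]

noncomputable def hatMatrix (X : Matrix m n R) : Matrix m m R := X * (Xᵀ * X)⁻¹ * Xᵀ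

variable {X : Matrix m n R}

theorem transpose_mul_one_sub_hatMatrix [DecidableEq m] (hX : IsUnit (Xᵀ * X).det) :
    Xᵀ * (1 - hatMatrix X) = 0 := by
  rw [hatMatrix, Matrix.mul_sub, Matrix.mul_one, ← Matrix.mul_assoc, ← Matrix.mul_assoc,
    mul_nonsing_inv _ hX, Matrix.one_mul, sub_self]

theorem nonsing_inv_mul_transpose_mulVec_mulVec_add [DecidableEq m]
    (hX : IsUnit (Xᵀ * X).det) (δ : n → R) (v e : m → R) :
    (Xᵀ * X)⁻¹ *ᵥ (Xᵀ *ᵥ (X *ᵥ δ + (1 - hatMatrix X) *ᵥ v + e))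
      = δ + ((Xᵀ * X)⁻¹ * Xᵀ) *ᵥ e := by
  simp only [mulVec_mulVec, mulVec_add, nonsing_inv_mul _ hX, transpose_mul_one_sub_hatMatrix hX,
    one_mulVec, zero_mulVec, add_zero]

theorem nonsing_inv_mul_transpose_mul_transpose (hX : IsUnit (Xᵀ * X).det) :
    (Xᵀ * X)⁻¹ * Xᵀ * ((Xᵀ * X)⁻¹ * Xᵀ)ᵀ = (Xᵀ * X)⁻¹ := by
  have hsymm : ((Xᵀ * X)⁻¹)ᵀ = (Xᵀ * X)⁻¹ := by
    rw [transpose_nonsing_inv, transpose_mul, transpose_transpose]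
  rw [transpose_mul, transpose_transpose, hsymm, ← Matrix.mul_assoc, Matrix.mul_assoc _ Xᵀ,
    nonsing_inv_mul _ hX, Matrix.one_mul]

end Matrix

theorem ProbabilityTheory.iIndepFun.pairwise_integral_mul_eq_zero {Ω ι : Type*}
    [MeasurableSpace Ω] {μ : Measure Ω} [IsProbabilityMeasure μ] {ε : ι → Ω → ℝ}
    (hindep : iIndepFun ε μ) (hint : ∀ i, Integrable (ε i) μ)
    (hmean : ∀ i, ∫ ω, ε i ω ∂μ = 0) :
    Pairwise fun i j => ∫ ω, ε i ω * ε j ω ∂μ = 0 := fun i j hij => by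
  change ∫ ω, ε i ω * ε j ω ∂μ = 0
  rw [(hindep.indepFun hij).integral_fun_mul_eq_mul_integral (hint i).aestronglyMeasurable
    (hint j).aestronglyMeasurable, hmean i, zero_mul]

section LinearImageOfErrors

variable {Ω ι : Type*} [MeasurableSpace Ω] {μ : Measure Ω} [Fintype ι] {ε : ι → Ω → ℝ}

theorem integrable_dotProduct (hint : ∀ i, Integrable (ε i) μ) (a : ι → ℝ) :
    Integrable (fun ω => a ⬝ᵥ fun i => ε i ω) μ :=
  integrable_finsetSum _ fun i _ => (hint i).const_mul (a i)

theorem integral_dotProduct (hint : ∀ i, Integrable (ε i) μ) (a : ι → ℝ) :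
    ∫ ω, (a ⬝ᵥ fun i => ε i ω) ∂μ = a ⬝ᵥ fun i => ∫ ω, ε i ω ∂μ := by
  simp only [dotProduct]
  rw [integral_finsetSum _ fun i _ => (hint i).const_mul (a i)]
  simp only [integral_const_mul]

theorem integral_dotProduct_mul_dotProduct (hL2 : ∀ i, MemLp (ε i) 2 μ) {σ2 : ℝ}
    (huncorr : Pairwise fun i j => ∫ ω, ε i ω * ε j ω ∂μ = 0)
    (hvar : ∀ i, ∫ ω, ε i ω ^ 2 ∂μ = σ2) (a b : ι → ℝ) :
    ∫ ω, (a ⬝ᵥ fun i => ε i ω) * (b ⬝ᵥ fun i => ε i ω) ∂μ = σ2 * (a ⬝ᵥ b) := by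
  have hmul : ∀ i j, Integrable (fun ω => ε i ω * ε j ω) μ := fun i j =>
    memLp_one_iff_integrable.mp ((hL2 j).smul (hL2 i) (p := 2) (q := 2) (r := 1))
  classical
  have hmoment : ∀ i j, ∫ ω, ε i ω * ε j ω ∂μ = if i = j then σ2 else 0 := by
    intro i j
    split_ifs with hij
    · simp only [hij, ← sq, hvar]
    · exact huncorr hij
  calc ∫ ω, (a ⬝ᵥ fun i => ε i ω) * (b ⬝ᵥ fun i => ε i ω) ∂μ
      = ∫ ω, ∑ i, ∑ j, a i * b j * (ε i ω * ε j ω) ∂μ := by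
        simp only [dotProduct, Finset.sum_mul_sum, mul_mul_mul_comm]
    _ = ∑ i, ∑ j, a i * b j * ∫ ω, ε i ω * ε j ω ∂μ := by
        rw [integral_finsetSum _ fun i _ =>
          integrable_finsetSum _ fun j _ => (hmul i j).const_mul _]
        refine Finset.sum_congr rfl fun i _ => ?_
        rw [integral_finsetSum _ fun j _ => (hmul i j).const_mul _]
        simp only [integral_const_mul]
    _ = σ2 * (a ⬝ᵥ b) := by
        simp [hmoment, dotProduct, Finset.mul_sum, mul_comm]

theorem integral_mulVec_apply_mul_mulVec_apply {κ : Type*} (hL2 : ∀ i, MemLp (ε i) 2 μ)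
    {σ2 : ℝ} (huncorr : Pairwise fun i j => ∫ ω, ε i ω * ε j ω ∂μ = 0)
    (hvar : ∀ i, ∫ ω, ε i ω ^ 2 ∂μ = σ2) (A : Matrix κ ι ℝ) (k l : κ) :
    ∫ ω, (A *ᵥ fun i => ε i ω) k * (A *ᵥ fun i => ε i ω) l ∂μ = σ2 * (A * Aᵀ) k l := by
  rw [mul_apply']
  exact integral_dotProduct_mul_dotProduct hL2 huncorr hvar (A k) (A l)

end LinearImageOfErrors

theorem restricted_regression_ols_unbiased_covariance_general
    {N p : ℕ} (X : Matrix (Fin N) (Fin p) ℝ) (hX : IsUnit (Xᵀ * X).det)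
    {Ω : Type*} [MeasureSpace Ω] [IsProbabilityMeasure (volume : Measure Ω)]
    (ε : Fin N → Ω → ℝ)
    (hindep : iIndepFun ε)
    (hL2 : ∀ i, MemLp (ε i) 2)
    (hmean : ∀ i, (∫ ω, ε i ω) = 0)
    (σ2 : ℝ)
    (hvar : ∀ i, (∫ ω, (ε i ω) ^ 2) = σ2)
    (u : Ω → Fin N → ℝ) (δ : Fin p → ℝ) :
    let PX : Matrix (Fin N) (Fin N) ℝ := X * (Xᵀ * X)⁻¹ * Xᵀ
    let y : Ω → Fin N → ℝ := fun ω => X *ᵥ δ + (1 - PX) *ᵥ u ω + fun i => ε i ω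
    let δhat : Ω → Fin p → ℝ := fun ω => (Xᵀ * X)⁻¹ *ᵥ (Xᵀ *ᵥ y ω)
    (∀ ℓ : Fin p, (∫ ω, δhat ω ℓ) = δ ℓ) ∧
    (∀ ℓ m : Fin p,
        (∫ ω, (δhat ω ℓ - δ ℓ) * (δhat ω m - δ m)) = σ2 * (Xᵀ * X)⁻¹ ℓ m) := by
  intro PX y δhat
  set M := (Xᵀ * X)⁻¹ * Xᵀ
  have hδhat : ∀ ω, δhat ω = δ + M *ᵥ fun i => ε i ω := fun ω =>
    nonsing_inv_mul_transpose_mulVec_mulVec_add hX δ (u ω) _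
  have hint : ∀ i, Integrable (ε i) := fun i => (hL2 i).integrable one_le_two
  refine ⟨fun ℓ => ?_, fun ℓ m => ?_⟩
  · simp only [hδhat, Pi.add_apply, mulVec]
    rw [integral_add (integrable_const _) (integrable_dotProduct hint (M ℓ)), integral_const,
      integral_dotProduct hint]
    simp [hmean]
  · simp only [hδhat, Pi.add_apply, add_sub_cancel_left]
    rw [integral_mulVec_apply_mul_mulVec_apply hL2
      (hindep.pairwise_integral_mul_eq_zero hint hmean) hvar,
      nonsing_inv_mul_transpose_mul_transpose hX]

/-- Sampling distribution of the OLS estimator in Restricted Network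
Regression: with `y = Xδ + (I − P_X)u + ε` where the `ε_i` are independent,
square-integrable, mean-zero with variance `σ²`, the estimator
`δ̂ = (XᵀX)⁻¹Xᵀy` satisfies `E[δ̂_ℓ] = δ_ℓ` and
`Cov(δ̂_ℓ, δ̂_m) = σ²((XᵀX)⁻¹)_{ℓm}`, regardless of the distribution of `u`. -/
theorem restricted_regression_ols_unbiased_covariance
    {N p : ℕ} (X : Matrix (Fin N) (Fin p) ℝ) (hX : IsUnit (Xᵀ * X).det)
    {Ω : Type*} [MeasureSpace Ω] [IsProbabilityMeasure (volume : Measure Ω)]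
    (ε : Fin N → Ω → ℝ) (hmeas : ∀ i, Measurable (ε i))
    (hindep : iIndepFun ε)
    (hL2 : ∀ i, MemLp (ε i) 2)
    (hmean : ∀ i, (∫ ω, ε i ω) = 0)
    (σ2 : ℝ) (hσ2 : 0 < σ2)
    (hvar : ∀ i, (∫ ω, (ε i ω) ^ 2) = σ2)
    (u : Ω → Fin N → ℝ) (δ : Fin p → ℝ) :
    let PX : Matrix (Fin N) (Fin N) ℝ := X * (Xᵀ * X)⁻¹ * Xᵀ
    let y : Ω → Fin N → ℝ := fun ω => X *ᵥ δ + (1 - PX) *ᵥ u ω + fun i => ε i ω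
    let δhat : Ω → Fin p → ℝ := fun ω => (Xᵀ * X)⁻¹ *ᵥ (Xᵀ *ᵥ y ω)
    (∀ ℓ : Fin p, (∫ ω, δhat ω ℓ) = δ ℓ) ∧
    (∀ ℓ m : Fin p,
        (∫ ω, (δhat ω ℓ - δ ℓ) * (δhat ω m - δ m)) = σ2 * (Xᵀ * X)⁻¹ ℓ m) :=
  restricted_regression_ols_unbiased_covariance_general X hX ε hindep hL2 hmean σ2 hvar u δ
end
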